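/- Define the Wootters concurrence of a two-qubit density matrix ρ as C(ρ) = max(0, ξ₁ − ξ₂ − ξ₃ − ξ₄), where ξ₁ ≥ ξ₂ ≥ ξ₃ ≥ ξ₄ are the square roots of the eigenvalues of ρ(σ_y⊗σ_y)ρ*(σ_y⊗σ_y). For the thermal state of the two-qubit XY model with γ̃ = 0, δ = 1 at temperature T > 0, C(ρ) = max(2 sinh(√(J²+4B²)/T)·J/√(J²+4B²) − 2, 0) up to normalization, and the critical temperature at which C vanishes is T_c = √(J²+4B²)/arcsinh(√(1 + 4B²/J²)). -/

import Mathlib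

open Matrix Kronecker Polynomial

/-- Pauli matrices `σ_x, σ_y, σ_z`. -/
noncomputable def σx : Matrix (Fin 2) (Fin 2) ℂ := !![0, 1; 1, 0]
noncomputable def σy : Matrix (Fin 2) (Fin 2) ℂ := !![0, -Complex.I; Complex.I, 0]
noncomputable def σz : Matrix (Fin 2) (Fin 2) ℂ := !![1, 0; 0, -1]

/-- The two-qubit XY Hamiltonian with `γ̃ = 0`, `δ = 1`:
`H = −(J/2)σ_x⊗σ_x − (J/2)σ_y⊗σ_y − 2Bσ_z⊗I`. -/
noncomputable def Hxy (J B : ℝ) : Matrix (Fin 2 × Fin 2) (Fin 2 × Fin 2) ℂ :=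
  (-(J / 2) : ℂ) • (σx ⊗ₖ σx) + (-(J / 2) : ℂ) • (σy ⊗ₖ σy) +
    (-(2 * B) : ℂ) • (σz ⊗ₖ (1 : Matrix (Fin 2) (Fin 2) ℂ))

/-- The (unnormalized) thermal state `ρ = exp(−H/T)`. -/
noncomputable def ρth (J B T : ℝ) : Matrix (Fin 2 × Fin 2) (Fin 2 × Fin 2) ℂ :=
  NormedSpace.exp ((-(1 / T) : ℂ) • Hxy J B)

/-!
In the basis `|00⟩, |01⟩, |10⟩, |11⟩` the matrix `-H/T` splits as `D + (η/T) N` with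
`η = √(J² + 4B²)`, `D = diag(2B/T, 0, 0, -2B/T)` and `N` supported on the `{|01⟩, |10⟩}` block
with `N³ = N`. Since `D N = N D = 0`, the thermal state is an explicit real "X-shaped" matrix, and
for such a matrix `ρ(σ_y⊗σ_y)ρ*(σ_y⊗σ_y)` has eigenvalues `1, 1, (√(1 + w²) ± w)²`, where
`w = J sinh(η/T)/η`. Sorted nonnegative roots are determined by the characteristic polynomial, so
`ξ = (√(1 + w²) + w, 1, 1, √(1 + w²) - w)` and `ξ₁ - ξ₂ - ξ₃ - ξ₄ = 2w - 2`. At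
`T = η / arsinh(η/J)` one has `sinh(η/T) = η/J`, i.e. `w = 1`.
-/

open NormedSpace

section Exponential

variable {A : Type*} [Ring A] [Algebra ℂ A] [TopologicalSpace A] [IsTopologicalRing A]
  [ContinuousSMul ℂ A] [T2Space A]

theorem exp_smul_add_smul_of_isIdempotentElem {P Q : A} (hP : IsIdempotentElem P)
    (hQ : IsIdempotentElem Q) (hPQ : P * Q = 0) (hQP : Q * P = 0) (a b : ℂ) :
    exp (a • P + b • Q) = 1 + (Complex.exp a - 1) • P + (Complex.exp b - 1) • Q := by
  have hpow (n : ℕ) : (a • P + b • Q) ^ (n + 1) = a ^ (n + 1) • P + b ^ (n + 1) • Q := by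
    induction n with
    | zero => simp
    | succ n ih =>
      rw [pow_succ, ih]
      simp only [add_mul, mul_add, smul_mul_smul, hP.eq, hQ.eq, hPQ, hQP, smul_zero, add_zero,
        zero_add, ← pow_succ]
  have hsum := (((expSeries_div_hasSum_exp a).smul_const P).add
    ((expSeries_div_hasSum_exp b).smul_const Q)).add (hasSum_ite_eq 0 (1 - P - Q))
  rw [exp_eq_tsum ℂ, Complex.exp_eq_exp_ℂ]
  convert hsum.tsum_eq using 1
  · refine tsum_congr fun n => ?_
    rcases n with _ | n
    · simp
    · simp [hpow, div_eq_inv_mul, mul_smul]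
  · module

theorem exp_smul_of_mul_mul_self {N : A} (hN : N * N * N = N) (t : ℂ) :
    exp (t • N) = 1 + (Complex.cosh t - 1) • (N * N) + Complex.sinh t • N := by
  have hP : IsIdempotentElem ((2 : ℂ)⁻¹ • (N * N + N)) := by
    simp only [IsIdempotentElem, smul_mul_smul, add_mul, mul_add, hN, ← mul_assoc]
    module
  have hQ : IsIdempotentElem ((2 : ℂ)⁻¹ • (N * N - N)) := by
    simp only [IsIdempotentElem, smul_mul_smul, sub_mul, mul_sub, hN, ← mul_assoc]
    module
  have hPQ : (2 : ℂ)⁻¹ • (N * N + N) * (2 : ℂ)⁻¹ • (N * N - N) = 0 := by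
    simp only [smul_mul_smul, add_mul, mul_sub, hN, ← mul_assoc]
    module
  have hQP : (2 : ℂ)⁻¹ • (N * N - N) * (2 : ℂ)⁻¹ • (N * N + N) = 0 := by
    simp only [smul_mul_smul, sub_mul, mul_add, hN, ← mul_assoc]
    module
  have hsplit : t • N = t • (2 : ℂ)⁻¹ • (N * N + N) + (-t) • (2 : ℂ)⁻¹ • (N * N - N) := by
    module
  rw [hsplit, exp_smul_add_smul_of_isIdempotentElem hP hQ hPQ hQP, Complex.cosh, Complex.sinh]
  module

end Exponential

lemma charpoly_of_middle_block {R : Type*} [CommRing R] {x y a b c d m n : R}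
    (hsum : m + n = a + d) (hprod : m * n = a * d - b * c) :
    (!![x, 0, 0, 0; 0, a, b, 0; 0, c, d, 0; 0, 0, 0, y] : Matrix (Fin 4) (Fin 4) R).charpoly =
      (X - C x) * (X - C y) * (X - C m) * (X - C n) := by
  have hsumC : C m + C n = C a + (C d : R[X]) := by rw [← C_add, hsum, C_add]
  have hprodC : C m * C n = C a * C d - C b * (C c : R[X]) := by
    rw [← C_mul, hprod, C_sub, C_mul, C_mul]
  rw [charpoly, det_succ_row_zero]
  simp [Fin.sum_univ_succ, det_succ_row_zero, charmatrix_apply, Fin.succAbove]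
  linear_combination (X - C x) * (X - C y) * (X * hsumC - hprodC)

theorem Antitone.eq_of_prod_X_sub_C_eq {n : ℕ} {a b : Fin n → ℝ} (ha : Antitone a)
    (hb : Antitone b) (h : ∏ i, (X - C (a i : ℂ)) = ∏ i, (X - C (b i : ℂ))) : a = b := by
  have hroots (f : Fin n → ℝ) :
      (∏ i, (X - C (f i : ℂ))).roots = (List.ofFn f : Multiset ℝ).map ((↑) : ℝ → ℂ) := by
    rw [roots_prod _ _ (Finset.prod_ne_zero_iff.mpr fun i _ => X_sub_C_ne_zero _)]
    simp [Multiset.bind_singleton, ← Fin.univ_val_map, Multiset.map_map]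
  have hperm : (List.ofFn a).Perm (List.ofFn b) := by
    rw [← Multiset.coe_eq_coe]
    exact Multiset.map_injective Complex.ofReal_injective (by rw [← hroots, ← hroots, h])
  exact List.ofFn_injective (hperm.eq_of_sortedGE ha.sortedGE_ofFn hb.sortedGE_ofFn)

theorem Antitone.eq_of_prod_X_sub_C_sq_eq {n : ℕ} {a b : Fin n → ℝ} (ha : Antitone a)
    (hb : Antitone b) (ha0 : ∀ i, 0 ≤ a i) (hb0 : ∀ i, 0 ≤ b i)
    (h : ∏ i, (X - C ((a i ^ 2 : ℝ) : ℂ)) = ∏ i, (X - C ((b i ^ 2 : ℝ) : ℂ))) : a = b := by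
  have hsq : (fun i => a i ^ 2) = fun i => b i ^ 2 :=
    Antitone.eq_of_prod_X_sub_C_eq (fun i j hij => pow_le_pow_left₀ (ha0 j) (ha hij) 2)
      (fun i j hij => pow_le_pow_left₀ (hb0 j) (hb hij) 2) h
  funext i
  exact (sq_eq_sq₀ (ha0 i) (hb0 i)).mp (congrFun hsq i)

/-- Index `(i, j)` of `Fin 2 × Fin 2` goes to `2 i + j`, so `Fin 4` lists `|00⟩, |01⟩, |10⟩, |11⟩`. -/
def twoQubitReindex : Matrix (Fin 4) (Fin 4) ℂ ≃ₐ[ℂ] Matrix (Fin 2 × Fin 2) (Fin 2 × Fin 2) ℂ :=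
  reindexAlgEquiv ℂ ℂ (finProdFinEquiv (m := 2) (n := 2)).symm

def xyMatrix (J B : ℝ) : Matrix (Fin 4) (Fin 4) ℂ :=
  !![-(2 * B), 0, 0, 0; 0, -(2 * B), -J, 0; 0, -J, 2 * B, 0; 0, 0, 0, 2 * B]

def yyMatrix : Matrix (Fin 4) (Fin 4) ℂ := !![0, 0, 0, -1; 0, 0, 1, 0; 0, 1, 0, 0; -1, 0, 0, 0]

def realXState (a b c d y : ℝ) : Matrix (Fin 4) (Fin 4) ℂ :=
  !![(a : ℂ), 0, 0, 0; 0, (b : ℂ), (y : ℂ), 0; 0, (y : ℂ), (c : ℂ), 0; 0, 0, 0, (d : ℂ)]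

noncomputable def spinFlipSqrtEigenvalues (w : ℝ) : Fin 4 → ℝ :=
  ![√(1 + w ^ 2) + w, 1, 1, √(1 + w ^ 2) - w]

lemma Hxy_eq_twoQubitReindex (J B : ℝ) : Hxy J B = twoQubitReindex (xyMatrix J B) := by
  ext ⟨a, b⟩ ⟨c, d⟩
  fin_cases a <;> fin_cases b <;> fin_cases c <;> fin_cases d <;>
    simp [twoQubitReindex, xyMatrix, Hxy, σx, σy, σz, finProdFinEquiv] <;> ring

lemma σy_kron_σy_eq_twoQubitReindex : σy ⊗ₖ σy = twoQubitReindex yyMatrix := by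
  ext ⟨a, b⟩ ⟨c, d⟩
  fin_cases a <;> fin_cases b <;> fin_cases c <;> fin_cases d <;>
    simp [twoQubitReindex, yyMatrix, σy, finProdFinEquiv]

lemma twoQubitReindex_map_conj (M : Matrix (Fin 4) (Fin 4) ℂ) :
    (twoQubitReindex M).map (starRingEnd ℂ) = twoQubitReindex (M.map (starRingEnd ℂ)) := by
  ext
  simp [twoQubitReindex]

open scoped Norms.Operator in
lemma exp_twoQubitReindex (M : Matrix (Fin 4) (Fin 4) ℂ) :
    exp (twoQubitReindex M) = twoQubitReindex (exp M) :=
  (map_exp twoQubitReindex (continuous_id.matrix_reindex _ _) M).symm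

lemma exp_neg_div_xyMatrix (J B T η : ℝ) (hη : η ≠ 0) (hη2 : η ^ 2 = J ^ 2 + 4 * B ^ 2) :
    exp ((-(1 / T) : ℂ) • xyMatrix J B) =
      realXState (Real.exp (2 * B / T))
        (Real.cosh (η / T) + 2 * B * Real.sinh (η / T) / η)
        (Real.cosh (η / T) - 2 * B * Real.sinh (η / T) / η)
        (Real.exp (-(2 * B / T))) (J * Real.sinh (η / T) / η) := by
  set N : Matrix (Fin 4) (Fin 4) ℂ :=
    !![0, 0, 0, 0; 0, ↑(2 * B / η), ↑(J / η), 0; 0, ↑(J / η), ↑(-(2 * B) / η), 0; 0, 0, 0, 0]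
  set D : Matrix (Fin 4) (Fin 4) ℂ := diagonal ![↑(2 * B / T), 0, 0, ↑(-(2 * B / T))]
  have hηC : (η : ℂ) ≠ 0 := by exact_mod_cast hη
  have hη2C : (η : ℂ) ^ 2 = J ^ 2 + 4 * B ^ 2 := by exact_mod_cast hη2
  have hNN : N * N = diagonal ![0, 1, 1, 0] := by
    ext i j
    fin_cases i <;> fin_cases j <;> simp [N, mul_apply, Fin.sum_univ_four] <;>
      field_simp <;> rw [hη2C] <;> ring
  have hNNN : N * N * N = N := by
    rw [hNN]
    ext i j
    fin_cases i <;> fin_cases j <;> simp [N, mul_apply, Fin.sum_univ_four]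
  have hDN : D * N = 0 := by
    ext i j
    fin_cases i <;> fin_cases j <;> simp [D, N, mul_apply, Fin.sum_univ_four]
  have hND : N * D = 0 := by
    ext i j
    fin_cases i <;> fin_cases j <;> simp [D, N, mul_apply, Fin.sum_univ_four]
  have hcomm : Commute D (((η / T : ℝ) : ℂ) • N) :=
    Commute.smul_right (by rw [Commute, SemiconjBy, hDN, hND]) _
  have hsplit : (-(1 / T) : ℂ) • xyMatrix J B = D + ((η / T : ℝ) : ℂ) • N := by
    ext i j
    fin_cases i <;> fin_cases j <;> simp [xyMatrix, D, N] <;> field_simp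
  rw [hsplit, Matrix.exp_add_of_commute _ _ hcomm, Matrix.exp_diagonal, Pi.exp_def,
    exp_smul_of_mul_mul_self hNNN, hNN]
  ext i j
  fin_cases i <;> fin_cases j <;> simp [realXState, N, ← Complex.exp_eq_exp_ℂ] <;> ring

lemma realXState_map_conj (a b c d y : ℝ) :
    (realXState a b c d y).map (starRingEnd ℂ) = realXState a b c d y := by
  ext i j
  fin_cases i <;> fin_cases j <;> simp [realXState]

lemma realXState_mul_yyMatrix_mul_self_mul_yyMatrix (a b c d y : ℝ) :
    realXState a b c d y * yyMatrix * realXState a b c d y * yyMatrix =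
      !![(a * d : ℂ), 0, 0, 0; 0, b * c + y ^ 2, 2 * b * y, 0; 0, 2 * c * y, b * c + y ^ 2, 0;
        0, 0, 0, a * d] := by
  ext i j
  fin_cases i <;> fin_cases j <;> simp [realXState, yyMatrix, mul_apply, Fin.sum_univ_four] <;> ring

lemma charpoly_realXState_mul_yyMatrix {a b c d y : ℝ} (had : a * d = 1)
    (hbc : b * c = 1 + y ^ 2) :
    (realXState a b c d y * yyMatrix * realXState a b c d y * yyMatrix).charpoly =
      ∏ i, (X - C (((spinFlipSqrtEigenvalues y i) ^ 2 : ℝ) : ℂ)) := by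
  have hadC : (a * d : ℂ) = 1 := by exact_mod_cast had
  have hbcC : (b * c : ℂ) = 1 + y ^ 2 := by exact_mod_cast hbc
  have hr2 : ((√(1 + y ^ 2) : ℝ) : ℂ) ^ 2 = 1 + y ^ 2 := by
    exact_mod_cast Real.sq_sqrt (by positivity : (0 : ℝ) ≤ 1 + y ^ 2)
  rw [realXState_mul_yyMatrix_mul_self_mul_yyMatrix, hadC]
  refine (charpoly_of_middle_block (m := (((√(1 + y ^ 2) + y) ^ 2 : ℝ) : ℂ))
      (n := (((√(1 + y ^ 2) - y) ^ 2 : ℝ) : ℂ)) ?_ ?_).trans ?_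
  · push_cast
    linear_combination 2 * hr2 - 2 * hbcC
  · push_cast
    linear_combination (((√(1 + y ^ 2) : ℝ) : ℂ) ^ 2 - y ^ 2 + 1) * hr2 -
      (b * c - (y : ℂ) ^ 2 + 1) * hbcC
  rw [Fin.prod_univ_four]
  simp only [spinFlipSqrtEigenvalues, cons_val, one_pow, Complex.ofReal_one]
  ring

lemma charpoly_ρth_mul_spinFlip (J B T : ℝ) (hJB : 0 < J ^ 2 + 4 * B ^ 2) :
    (ρth J B T * (σy ⊗ₖ σy) * (ρth J B T).map (starRingEnd ℂ) * (σy ⊗ₖ σy)).charpoly =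
      ∏ i, (X - C (((spinFlipSqrtEigenvalues
        (J * Real.sinh (√(J ^ 2 + 4 * B ^ 2) / T) / √(J ^ 2 + 4 * B ^ 2)) i) ^ 2 : ℝ) : ℂ)) := by
  set η := √(J ^ 2 + 4 * B ^ 2)
  have hη : η ≠ 0 := (Real.sqrt_pos.mpr hJB).ne'
  have hη2 : η ^ 2 = J ^ 2 + 4 * B ^ 2 := Real.sq_sqrt hJB.le
  rw [ρth, Hxy_eq_twoQubitReindex, ← map_smul, exp_twoQubitReindex,
    exp_neg_div_xyMatrix J B T η hη hη2, σy_kron_σy_eq_twoQubitReindex, twoQubitReindex_map_conj,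
    realXState_map_conj, ← map_mul, ← map_mul, ← map_mul, twoQubitReindex, coe_reindexAlgEquiv,
    charpoly_reindex]
  refine charpoly_realXState_mul_yyMatrix (by rw [← Real.exp_add]; simp) ?_
  field_simp
  linear_combination η ^ 2 * Real.cosh_sq_sub_sinh_sq (η / T) + Real.sinh (η / T) ^ 2 * hη2

lemma spinFlipSqrtEigenvalues_antitone {w : ℝ} (hw : 0 ≤ w) :
    Antitone (spinFlipSqrtEigenvalues w) := by
  have hr : 1 ≤ √(1 + w ^ 2) := Real.one_le_sqrt.mpr (by nlinarith)
  have hr2 : √(1 + w ^ 2) ^ 2 = 1 + w ^ 2 := Real.sq_sqrt (by positivity)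
  rw [Fin.antitone_iff_succ_le]
  intro i
  fin_cases i <;> simp [spinFlipSqrtEigenvalues] <;> nlinarith

lemma spinFlipSqrtEigenvalues_nonneg (w : ℝ) (i : Fin 4) : 0 ≤ spinFlipSqrtEigenvalues w i := by
  obtain ⟨hlow, hup⟩ := abs_le.mp (Real.abs_le_sqrt (by linarith : w ^ 2 ≤ 1 + w ^ 2))
  fin_cases i <;> simp [spinFlipSqrtEigenvalues] <;> linarith

theorem stmt_15 (J B T : ℝ) (hJ : 0 < J) (hT : 0 < T)
    (ξ : Fin 4 → ℝ) (hξ0 : ∀ i, 0 ≤ ξ i) (hξmono : Antitone ξ)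
    (hchar : (ρth J B T * (σy ⊗ₖ σy) * (ρth J B T).map (starRingEnd ℂ) *
        (σy ⊗ₖ σy)).charpoly = ∏ i : Fin 4, (X - Polynomial.C (((ξ i) ^ 2 : ℝ) : ℂ))) :
    max 0 (ξ 0 - ξ 1 - ξ 2 - ξ 3) =
      max (2 * Real.sinh (Real.sqrt (J ^ 2 + 4 * B ^ 2) / T) *
        J / Real.sqrt (J ^ 2 + 4 * B ^ 2) - 2) 0 ∧
    2 * Real.sinh (Real.sqrt (J ^ 2 + 4 * B ^ 2) /
        (Real.sqrt (J ^ 2 + 4 * B ^ 2) / Real.arsinh (Real.sqrt (1 + 4 * B ^ 2 / J ^ 2)))) *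
        J / Real.sqrt (J ^ 2 + 4 * B ^ 2) - 2 = 0 := by
  have hJB : 0 < J ^ 2 + 4 * B ^ 2 := by positivity
  set η := √(J ^ 2 + 4 * B ^ 2)
  have hη : 0 < η := Real.sqrt_pos.mpr hJB
  have hw : 0 ≤ J * Real.sinh (η / T) / η :=
    div_nonneg (mul_nonneg hJ.le (Real.sinh_nonneg_iff.mpr (div_pos hη hT).le)) hη.le
  have hξ : ξ = spinFlipSqrtEigenvalues (J * Real.sinh (η / T) / η) :=
    hξmono.eq_of_prod_X_sub_C_sq_eq (spinFlipSqrtEigenvalues_antitone hw) hξ0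
      (spinFlipSqrtEigenvalues_nonneg _) (hchar.symm.trans (charpoly_ρth_mul_spinFlip J B T hJB))
  have hconcurrence : ξ 0 - ξ 1 - ξ 2 - ξ 3 = 2 * Real.sinh (η / T) * J / η - 2 := by
    simp [hξ, spinFlipSqrtEigenvalues]
    ring
  have hcrit : √(1 + 4 * B ^ 2 / J ^ 2) = η / J := by
    rw [show 1 + 4 * B ^ 2 / J ^ 2 = (J ^ 2 + 4 * B ^ 2) / J ^ 2 by field_simp,
      Real.sqrt_div hJB.le, Real.sqrt_sq hJ.le]
  refine ⟨by rw [hconcurrence, max_comm], ?_⟩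
  rw [hcrit, div_div_cancel₀ hη.ne', Real.sinh_arsinh]
  field_simp
  norm_num
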